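/- arXiv:math/0401158 — 6 statements merged into one kernel-verified Lean document; each statement's English description precedes it below -/
import Mathlib

section
/- Let (∂) : 0 → M → C₁ →^∂ C₀ → R → 0 be a K-split crossed extension with chosen K-linear sections p : R → C₀ of π (with p(1)=1) and q : V → C₁ of ∂ : C₁ → V := im(∂). Define m(r,s) = q(p(r)p(s) − p(rs)) and f(r,s,t) = p(r)·m(s,t) − m(rs,t) + m(r,st) − m(r,s)·p(t). Then f takes values in M = ker(∂) and is a Hochschild 3-cocycle: for all r,s,t,u ∈ R, r·f(s,t,u) − f(rs,t,u) + f(r,st,u) − f(r,s,tu) + f(r,s,t)·u = 0. -/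
open MulOpposite

/-- For a `K`-split crossed extension `0 → M → C₁ →^d C₀ →^π R → 0` with
`K`-linear sections `p : R → C₀` of `π` (with `p 1 = 1`) and `q` of `d` on its image
`V = im d`, put `m(r,s) = q(p(r)p(s) − p(rs))` and
`f(r,s,t) = p(r)·m(s,t) − m(rs,t) + m(r,st) − m(r,s)·p(t)`.
Then `f` takes values in `M = ker d` and is a Hochschild 3-cocycle. -/
theorem stmt10 {K C₀ C₁ R : Type*} [CommRing K] [Ring C₀] [Algebra K C₀]
    [Ring R] [Algebra K R]
    [AddCommGroup C₁] [Module K C₁] [Module C₀ C₁] [Module C₀ᵐᵒᵖ C₁]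
    [SMulCommClass C₀ C₀ᵐᵒᵖ C₁]
    (d : C₁ →+ C₀)
    (hl : ∀ (r : C₀) (x : C₁), d (r • x) = r * d x)
    (hr : ∀ (r : C₀) (x : C₁), d (op r • x) = d x * r)
    (peiffer : ∀ x y : C₁, d x • y = op (d y) • x)
    (π : C₀ →+* R) (hπ : Function.Surjective π)
    (hexactC : ∀ x : C₀, π x = 0 ↔ x ∈ Set.range d)
    (p : R →ₗ[K] C₀) (hp : ∀ r : R, π (p r) = r) (hp1 : p 1 = 1)
    (q : C₀ →ₗ[K] C₁) (hq : ∀ v ∈ Set.range d, d (q v) = v)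
    (mf : R → R → C₁)
    (hm : ∀ r s : R, mf r s = q (p r * p s - p (r * s)))
    (ff : R → R → R → C₁)
    (hf : ∀ r s t : R,
      ff r s t = p r • mf s t - mf (r * s) t + mf r (s * t) - op (p t) • mf r s) :
    -- f takes values in M = ker d
    (∀ r s t : R, d (ff r s t) = 0) ∧
    -- f is a Hochschild 3-cocycle (the R-bimodule actions on M ⊆ C₁ are through p)
    (∀ r s t u : R,
      p r • ff s t u - ff (r * s) t u + ff r (s * t) u - ff r s (t * u)
        + op (p u) • ff r s t = 0) := by

  have hdm : ∀ r s : R, d (mf r s) = p r * p s - p (r * s) := by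
    intro r s
    rw [hm]
    apply hq
    rw [← hexactC]
    simp [map_mul, map_sub, hp]
  constructor
  · intro r s t
    rw [hf]
    rw [map_sub, map_add, map_sub, hl, hr, hdm, hdm, hdm, hdm]
    noncomm_ring
  · intro r s t u
    have key : (p r * p s - p (r * s)) • mf t u
        = op (p t * p u - p (t * u)) • mf r s := by
      rw [← hdm r s, ← hdm t u, peiffer]
    have expand : p r • ff s t u - ff (r * s) t u + ff r (s * t) u - ff r s (t * u)
        + op (p u) • ff r s t
        = (p r * p s - p (r * s)) • mf t u - op (p t * p u - p (t * u)) • mf r s := by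
      simp only [hf, smul_sub, smul_add, sub_smul, mul_smul, op_mul, op_sub, mul_assoc]
      rw [smul_comm (p r) (op (p u))]
      abel
    rw [expand, key, sub_self]
end

section
/- Let (∂): 0 → M → C₁ →^∂ C₀ → R → 0 be a K-split crossed extension with sections p : R → C₀ (p(1)=1) and a given ∂-extension 0 → C₁ →^μ S →^σ R → 0 with compatible ξ : S → C₀ and a K-linear section v : C₀ → S with v(1)=1; set u = v∘p and define n : R ⊗ R → C₁ by μ(n(r,s)) = u(r)u(s) − u(rs). Then p(r)·n(s,t) − n(rs,t) + n(r,st) − n(r,s)·p(t) = 0 for all r,s,t ∈ R. -/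
open MulOpposite

/-- In the situation of a `K`-split crossed extension with section
`p : R → C₀` (`p 1 = 1`) and a `d`-extension `0 → C₁ →^μ S →^σ R → 0` with compatible
`ξ : S → C₀` and `K`-linear section `v : C₀ → S` (`v 1 = 1`), set `u = v ∘ p` and define
`n : R ⊗ R → C₁` by `μ(n(r,s)) = u(r)u(s) − u(rs)`. Then
`p(r)·n(s,t) − n(rs,t) + n(r,st) − n(r,s)·p(t) = 0`. -/
theorem stmt12 {K C₀ C₁ R S : Type*} [CommRing K] [Ring C₀] [Algebra K C₀]
    [Ring R] [Algebra K R] [Ring S] [Algebra K S]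
    [AddCommGroup C₁] [Module C₀ C₁] [Module C₀ᵐᵒᵖ C₁]
    [SMulCommClass C₀ C₀ᵐᵒᵖ C₁]
    (d : C₁ →+ C₀)
    (hl : ∀ (r : C₀) (x : C₁), d (r • x) = r * d x)
    (hr : ∀ (r : C₀) (x : C₁), d (op r • x) = d x * r)
    (peiffer : ∀ x y : C₁, d x • y = op (d y) • x)
    (π : C₀ →+* R) (hπ : Function.Surjective π)
    (hexactC : ∀ x : C₀, π x = 0 ↔ x ∈ Set.range d)
    (μ : C₁ →+ S) (hμinj : Function.Injective μ)
    (σ : S →+* R) (hσ : Function.Surjective σ)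
    (hexactS : ∀ s : S, σ s = 0 ↔ s ∈ Set.range μ)
    (ξ : S →+* C₀)
    (hξμ : ∀ x : C₁, ξ (μ x) = d x)
    (hπξ : ∀ s : S, π (ξ s) = σ s)
    (hact1 : ∀ (x : C₁) (s : S), μ x * s = μ (op (ξ s) • x))
    (hact2 : ∀ (x : C₁) (s : S), s * μ x = μ (ξ s • x))
    (p : R →ₗ[K] C₀) (hp : ∀ r : R, π (p r) = r) (hp1 : p 1 = 1)
    (v : C₀ →ₗ[K] S) (hv : ∀ c : C₀, ξ (v c) = c) (hv1 : v 1 = 1)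
    (nf : R → R → C₁)
    (hn : ∀ r s : R, μ (nf r s) = v (p r) * v (p s) - v (p (r * s))) :
    ∀ r s t : R,
      p r • nf s t - nf (r * s) t + nf r (s * t) - op (p t) • nf r s = 0 := by
  intro r s t
  apply hμinj
  have h1 : μ (p r • nf s t) = v (p r) * μ (nf s t) := by
    rw [hact2]; congr 1; rw [hv]
  have h2 : μ (op (p t) • nf r s) = μ (nf r s) * v (p t) := by
    rw [hact1]; congr 2; rw [hv]
  simp only [map_sub, map_add, map_zero, h1, h2, hn]
  rw [← mul_assoc r s t]
  noncomm_ring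
end

section
/- Let ∂ : C₁ → C₀ be a crossed extension of R by M, K-split, with sections p, q as usual, let n : R⊗R → C₁ satisfy p(r)n(s,t) − n(rs,t) + n(r,st) − n(r,s)p(t) = 0 and ∂n(r,s) = p(r)p(s) − p(rs). Then S := C₁ ⊕ R with multiplication (x,r)(y,s) = (x*y + p(r)·y + x·p(s) + n(r,s), rs) is an associative K-algebra, where x*y = ∂(x)·y. -/
open MulOpposite

/-- Given a `K`-split crossed extension `0 → M → C₁ →^d C₀ →^π R → 0` with
section `p : R → C₀` of `π` and `n : R ⊗ R → C₁` satisfying the 2-cocycle-type identity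
`p(r)·n(s,t) − n(rs,t) + n(r,st) − n(r,s)·p(t) = 0` and `d(n(r,s)) = p(r)p(s) − p(rs)`,
the product `(x,r)(y,s) = (x*y + p(r)·y + x·p(s) + n(r,s), rs)` on `S = C₁ ⊕ R`
(with `x*y = d(x)·y`) is associative. -/
theorem stmt13 {K C₀ C₁ R : Type*} [CommRing K] [Ring C₀] [Algebra K C₀]
    [Ring R] [Algebra K R]
    [AddCommGroup C₁] [Module C₀ C₁] [Module C₀ᵐᵒᵖ C₁]
    [SMulCommClass C₀ C₀ᵐᵒᵖ C₁]
    (d : C₁ →+ C₀)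
    (hl : ∀ (r : C₀) (x : C₁), d (r • x) = r * d x)
    (hr : ∀ (r : C₀) (x : C₁), d (op r • x) = d x * r)
    (peiffer : ∀ x y : C₁, d x • y = op (d y) • x)
    (π : C₀ →+* R) (hπ : Function.Surjective π)
    (hexactC : ∀ x : C₀, π x = 0 ↔ x ∈ Set.range d)
    (p : R →ₗ[K] C₀) (hp : ∀ r : R, π (p r) = r) (hp1 : p 1 = 1)
    (nf : R → R → C₁)
    (hn1 : ∀ r s t : R,
      p r • nf s t - nf (r * s) t + nf r (s * t) - op (p t) • nf r s = 0)
    (hn2 : ∀ r s : R, d (nf r s) = p r * p s - p (r * s))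
    (mul : (C₁ × R) → (C₁ × R) → (C₁ × R))
    (hmul : ∀ a b : C₁ × R,
      mul a b = (d a.1 • b.1 + p a.2 • b.1 + op (p b.2) • a.1 + nf a.2 b.2, a.2 * b.2)) :
    ∀ a b c : C₁ × R, mul (mul a b) c = mul a (mul b c) := by

  intro a b c
  obtain ⟨x, r⟩ := a; obtain ⟨y, s⟩ := b; obtain ⟨z, t⟩ := c
  simp only [hmul]
  refine Prod.ext ?_ (mul_assoc r s t)
  have hn1' : ∀ r s t : R,
      p r • nf s t + nf r (s * t) = nf (r * s) t + op (p t) • nf r s := by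
    intro r s t
    have h := hn1 r s t
    have h2 : p r • nf s t + nf r (s * t) - (nf (r * s) t + op (p t) • nf r s) = 0 := by
      rw [← h]; abel
    exact sub_eq_zero.mp h2
  simp only [map_add, hn2, hl, hr, add_smul, sub_smul, smul_add, mul_smul, peiffer]
  have hn1'' : ∀ r s t : R,
      nf r (s * t) = nf (r * s) t + op (p t) • nf r s - p r • nf s t := by
    intro r s t; rw [← hn1']; abel
  have hcomm : ∀ (a b : C₀) (w : C₁), a • op b • w = op b • a • w := fun a b w =>
    (smul_comm _ _ _)
  simp only [op_add, op_sub, op_mul, add_smul, sub_smul, mul_smul, hcomm, hn1'']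
  abel
end

section
/- Let X be an abelian group with pX = 0 (a vector space over F_p), let Z[X] be the free abelian group on symbols [x], x ∈ X, modulo [0] = 0, with augmentation η([x]) = x, and R(X) = ker η. For x,y ∈ X write ⟨x,y⟩ = [x] + [y] − [x+y] ∈ R(X). Then the map i : X → R(X)/p²R(X) given by i(x) = Σ_{j=0}^{p−1} p·⟨jx, x⟩ (mod p²R(X)) is a well-defined group homomorphism, and the sequence 0 → X →^i R(X)/p²R(X) →^σ Z/p²Z[X] →^η X → 0 is exact, where σ is induced by the inclusion R(X) ⊆ Z[X]. -/
/-! STATEMENT 15: For an `F_p`-vector space `X` (an abelian group with `p • x = 0`), with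
`Z[X]` the free abelian group on symbols `[x]` modulo `[0] = 0` (modelled by `X →₀ ℤ`;
the relation `[0] = 0` is harmless here, see below), `η([x]) = x`, `R(X) = ker η`, and
`⟨x,y⟩ = [x] + [y] − [x+y]`, the map `i(x) = Σ_{j<p} p·⟨jx,x⟩ mod p²R(X)` is a
well-defined group homomorphism and
`0 → X →^i R(X)/p²R(X) →^σ Z/p²Z[X] →^η X → 0` is exact. -/

/-- `η : Z[X] → X`, `Σ n_x [x] ↦ Σ n_x x`. -/
noncomputable def eta (X : Type*) [AddCommGroup X] : (X →₀ ℤ) →ₗ[ℤ] X :=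
  Finsupp.linearCombination ℤ (id : X → X)

/-- `⟨a,b⟩ = [a] + [b] − [a+b] ∈ R(X)`. -/
noncomputable def br {X : Type*} [AddCommGroup X] (a b : X) : X →₀ ℤ :=
  Finsupp.single a 1 + Finsupp.single b 1 - Finsupp.single (a + b) 1

/-- `R(X) = ker η`. -/
noncomputable def RX (X : Type*) [AddCommGroup X] : Submodule ℤ (X →₀ ℤ) :=
  LinearMap.ker (eta X)

lemma eta_br {X : Type*} [AddCommGroup X] (a b : X) : eta X (br a b) = 0 := by
  simp [eta, br]

/-- The submodule `p²·N` of `N`. -/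
noncomputable def p2sub (N : Type*) [AddCommGroup N] [Module ℤ N] (p : ℕ) : Submodule ℤ N :=
  LinearMap.range (((p : ℤ) ^ 2) • (LinearMap.id : N →ₗ[ℤ] N))

/-- `R(X)/p²R(X)`. -/
noncomputable abbrev QR (X : Type*) [AddCommGroup X] (p : ℕ) :=
  RX X ⧸ p2sub (RX X) p

/-- `Z/p²Z[X] = Z[X]/p²Z[X]`. -/
noncomputable abbrev QZ (X : Type*) [AddCommGroup X] (p : ℕ) :=
  (X →₀ ℤ) ⧸ p2sub (X →₀ ℤ) p

/-- `σ : R(X)/p²R(X) → Z/p²Z[X]` induced by the inclusion `R(X) ⊆ Z[X]`. -/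
noncomputable def sigmaMap (X : Type*) [AddCommGroup X] (p : ℕ) :
    QR X p →ₗ[ℤ] QZ X p :=
  Submodule.mapQ _ _ (RX X).subtype (by
    rintro x ⟨y, rfl⟩
    exact ⟨(RX X).subtype y, by
      simp only [LinearMap.smul_apply, LinearMap.id_coe, id_eq, map_smul]⟩)

/-- `η̄ : Z/p²Z[X] → X` induced by `η` (well defined since `pX = 0`). -/
noncomputable def etaBar (X : Type*) [AddCommGroup X] (p : ℕ) (hX : ∀ x : X, p • x = 0) :
    QZ X p →ₗ[ℤ] X :=
  Submodule.liftQ _ (eta X) (by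
    rintro x ⟨y, rfl⟩
    simp only [LinearMap.mem_ker, LinearMap.smul_apply, LinearMap.id_coe, id_eq, map_smul]
    have h : (p : ℤ) • eta X y = 0 := by
      rw [natCast_zsmul]; exact hX _
    rw [pow_two, mul_smul, h, smul_zero])

/-- `i : X → R(X)/p²R(X)`, `i(x) = Σ_{j=0}^{p−1} p·⟨jx, x⟩  (mod p²R(X))`. -/
noncomputable def iMap (X : Type*) [AddCommGroup X] (p : ℕ) : X → QR X p := fun x =>
  Submodule.Quotient.mk
    ⟨∑ j ∈ Finset.range p, (p : ℤ) • br (j • x) x, by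
      simp [RX, LinearMap.mem_ker, map_sum, map_smul, eta_br]⟩

/-! Telescoping `⟨jx, x⟩ = [x] − ([(j+1)x] − [jx])` over `j < p` and using `px = 0` gives
`Σ_{j<p} ⟨jx, x⟩ = p[x]`, so `i(x)` is the class of `p²[x]`. Additivity then reduces to
`p²[x+y] − p²[x] − p²[y] = −p²⟨x,y⟩`, and injectivity and `ker σ = im i` to the fact that
`Z[X]` has no `p`-torsion: if `r ∈ R(X)` equals `p²ξ` in `Z[X]`, then `r ≡ p²[η ξ]` modulo
`p²R(X)` because `[η ξ] − ξ ∈ R(X)`. -/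

section

variable {X : Type*} [AddCommGroup X] {p : ℕ}

lemma mem_p2sub {N : Type*} [AddCommGroup N] [Module ℤ N] {z : N} :
    z ∈ p2sub N p ↔ ∃ y : N, ((p : ℤ) ^ 2) • y = z :=
  Iff.rfl

lemma mem_RX {ξ : X →₀ ℤ} : ξ ∈ RX X ↔ eta X ξ = 0 :=
  Iff.rfl

lemma eta_single (x : X) : eta X (Finsupp.single x 1) = x := by
  simp [eta]

lemma single_eta_sub_mem_RX (ξ : X →₀ ℤ) : Finsupp.single (eta X ξ) 1 - ξ ∈ RX X := by
  rw [mem_RX, map_sub, eta_single, sub_self]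

lemma sq_zsmul_eq_zero (hX : ∀ x : X, p • x = 0) (x : X) : ((p : ℤ) ^ 2) • x = 0 := by
  rw [pow_two, mul_smul, natCast_zsmul, hX]

lemma sq_smul_single_mem_RX (hX : ∀ x : X, p • x = 0) (x : X) :
    ((p : ℤ) ^ 2) • Finsupp.single x 1 ∈ RX X := by
  rw [mem_RX, map_smul, eta_single, sq_zsmul_eq_zero hX]

lemma sum_range_br_nsmul (hX : ∀ x : X, p • x = 0) (x : X) :
    ∑ j ∈ Finset.range p, br (j • x) x = (p : ℤ) • Finsupp.single x 1 := by
  have h (j : ℕ) : br (j • x) x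
      = Finsupp.single x 1 - (Finsupp.single ((j + 1) • x) 1 - Finsupp.single (j • x) 1) := by
    rw [br, succ_nsmul]
    abel
  simp_rw [h]
  rw [Finset.sum_sub_distrib, Finset.sum_const, Finset.card_range,
    Finset.sum_range_sub (fun j => Finsupp.single (j • x) 1), hX, zero_smul,
    sub_self, sub_zero, natCast_zsmul]

lemma iMap_eq (hX : ∀ x : X, p • x = 0) (x : X) :
    iMap X p x = Submodule.Quotient.mk ⟨((p : ℤ) ^ 2) • Finsupp.single x 1,
      sq_smul_single_mem_RX hX x⟩ := by
  refine congrArg _ (Subtype.ext ?_)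
  change ∑ j ∈ Finset.range p, (p : ℤ) • br (j • x) x = _
  rw [← Finset.smul_sum, sum_range_br_nsmul hX, smul_smul, ← pow_two]

lemma QR_mk_eq_mk_iff {r r' : RX X} :
    (Submodule.Quotient.mk r : QR X p) = Submodule.Quotient.mk r' ↔
      ∃ s ∈ RX X, ((p : ℤ) ^ 2) • s = (r : X →₀ ℤ) - r' := by
  rw [Submodule.Quotient.eq, mem_p2sub]
  constructor
  · rintro ⟨s, hs⟩
    exact ⟨s, s.2, congrArg Subtype.val hs⟩
  · rintro ⟨s, hs, h⟩
    exact ⟨⟨s, hs⟩, Subtype.ext h⟩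

lemma sigmaMap_mk (r : RX X) :
    sigmaMap X p (Submodule.Quotient.mk r) = Submodule.Quotient.mk (r : X →₀ ℤ) :=
  rfl

lemma iMap_add (hX : ∀ x : X, p • x = 0) (x y : X) :
    iMap X p (x + y) = iMap X p x + iMap X p y := by
  rw [iMap_eq hX, iMap_eq hX, iMap_eq hX, ← Submodule.Quotient.mk_add, QR_mk_eq_mk_iff]
  refine ⟨-br x y, neg_mem (eta_br x y), ?_⟩
  simp only [br, smul_neg, smul_sub, smul_add, Submodule.coe_add]
  abel

lemma iMap_injective (hp : p ≠ 0) (hX : ∀ x : X, p • x = 0) : Function.Injective (iMap X p) := by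
  intro x y h
  rw [iMap_eq hX, iMap_eq hX, QR_mk_eq_mk_iff] at h
  obtain ⟨s, hs, hps⟩ := h
  have hp2 : ((p : ℤ) ^ 2) ≠ 0 := pow_ne_zero 2 (Int.natCast_ne_zero.mpr hp)
  have hs_eq : s = Finsupp.single x 1 - Finsupp.single y 1 :=
    smul_right_injective (X →₀ ℤ) hp2 (hps.trans (smul_sub _ _ _).symm)
  rwa [mem_RX, hs_eq, map_sub, eta_single, eta_single, sub_eq_zero] at hs

lemma sigmaMap_eq_zero_iff (hX : ∀ x : X, p • x = 0) (q : QR X p) :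
    sigmaMap X p q = 0 ↔ q ∈ Set.range (iMap X p) := by
  induction q using Submodule.Quotient.induction_on with
  | H r =>
    rw [sigmaMap_mk, Submodule.Quotient.mk_eq_zero, mem_p2sub]
    constructor
    · rintro ⟨ξ, hξ⟩
      refine ⟨eta X ξ, ?_⟩
      rw [iMap_eq hX, QR_mk_eq_mk_iff]
      exact ⟨_, single_eta_sub_mem_RX ξ, by rw [smul_sub, hξ]⟩
    · rintro ⟨x, hx⟩
      rw [iMap_eq hX, QR_mk_eq_mk_iff] at hx
      obtain ⟨s, -, hs⟩ := hx
      exact ⟨Finsupp.single x 1 - s, by rw [smul_sub, hs, sub_sub_cancel]⟩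

lemma etaBar_sigmaMap (hX : ∀ x : X, p • x = 0) (q : QR X p) :
    etaBar X p hX (sigmaMap X p q) = 0 := by
  induction q using Submodule.Quotient.induction_on with
  | H r => exact r.2

lemma etaBar_eq_zero_iff (hX : ∀ x : X, p • x = 0) (z : QZ X p) :
    etaBar X p hX z = 0 ↔ z ∈ Set.range (sigmaMap X p) := by
  constructor
  · induction z using Submodule.Quotient.induction_on with
    | H ξ => exact fun h => ⟨Submodule.Quotient.mk ⟨ξ, h⟩, rfl⟩
  · rintro ⟨q, rfl⟩
    exact etaBar_sigmaMap hX q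

lemma etaBar_surjective (hX : ∀ x : X, p • x = 0) : Function.Surjective (etaBar X p hX) :=
  fun x => ⟨Submodule.Quotient.mk (Finsupp.single x 1), eta_single x⟩

end

theorem stmt15 {X : Type*} [AddCommGroup X] (p : ℕ) (hp : p.Prime)
    (hX : ∀ x : X, p • x = 0) :
    -- i is a (well-defined) group homomorphism
    (∀ x y : X, iMap X p (x + y) = iMap X p x + iMap X p y) ∧
    -- exactness at X (left): i is injective
    Function.Injective (iMap X p) ∧
    -- exactness at R(X)/p²R(X): ker σ = im i
    (∀ q : QR X p, sigmaMap X p q = 0 ↔ q ∈ Set.range (iMap X p)) ∧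
    -- exactness at Z/p²Z[X]: ker η̄ = im σ
    (∀ z : QZ X p, etaBar X p hX z = 0 ↔ z ∈ Set.range (sigmaMap X p)) ∧
    -- exactness at X (right): η̄ is surjective
    Function.Surjective (etaBar X p hX) :=
  ⟨iMap_add hX, iMap_injective hp.ne_zero hX, sigmaMap_eq_zero_iff hX,
    etaBar_eq_zero_iff hX, etaBar_surjective hX⟩
end

section
/- Let f : X_* → Y_* be a morphism of chain algebras over a commutative ring K which is surjective in positive degrees. Then f is injective-with-respect-to the maps S(n−1) → D(n) for all n ≥ 0 (i.e., has the right lifting property) if and only if f is surjective in all degrees and ker(f) is acyclic, if and only if f is a fibration and a quasi-isomorphism. -/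
universe u

/-- A (non-negatively) graded `K`-algebra, given by an internal grading of a `K`-algebra
by `K`-submodules. -/
structure GradedAlg (K : Type) [CommRing K] : Type (u + 1) where
  carrier : Type u
  [ring : Ring carrier]
  [alg : Algebra K carrier]
  grade : ℕ → Submodule K carrier
  one_mem : (1 : carrier) ∈ grade 0
  mul_mem : ∀ {i j : ℕ} {x y : carrier}, x ∈ grade i → y ∈ grade j → x * y ∈ grade (i + j)
  internal : DirectSum.IsInternal fun n => grade n

attribute [instance] GradedAlg.ring GradedAlg.alg

/-- A chain algebra: a graded `K`-algebra with a degree `−1` differential satisfying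
`d² = 0` and the Leibniz rule (`d` vanishes on degree 0). -/
structure ChainAlg (K : Type) [CommRing K] extends GradedAlg.{u} K where
  d : carrier →ₗ[K] carrier
  d_grade : ∀ (n : ℕ) (x : carrier), x ∈ grade (n + 1) → d x ∈ grade n
  d_zero : ∀ x ∈ grade 0, d x = 0
  d_sq : ∀ x : carrier, d (d x) = 0
  leibniz : ∀ (i : ℕ) (x y : carrier), x ∈ grade i →
    d (x * y) = d x * y + ((-1 : ℤ) ^ i) • (x * d y)

/-- A morphism of chain algebras. -/
structure ChainAlgHom (K : Type) [CommRing K] (C D : ChainAlg.{u} K) where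
  toFun : C.carrier →ₐ[K] D.carrier
  grade_mem : ∀ (n : ℕ) (x : C.carrier), x ∈ C.grade n → toFun x ∈ D.grade n
  comm_d : ∀ x : C.carrier, toFun (C.d x) = D.d (toFun x)

/-- Fibrations of chain algebras: surjective in all positive degrees. -/
def IsFib {K : Type} [CommRing K] {C D : ChainAlg.{u} K} (f : ChainAlgHom K C D) : Prop :=
  ∀ n : ℕ, 0 < n → ∀ y ∈ D.grade n, ∃ x ∈ C.grade n, f.toFun x = y

/-- Weak equivalences of chain algebras: quasi-isomorphisms. -/
def IsQuasiIso {K : Type} [CommRing K] {C D : ChainAlg.{u} K} (f : ChainAlgHom K C D) : Prop :=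
  ∀ n : ℕ,
    (∀ z ∈ D.grade n, D.d z = 0 →
      ∃ x ∈ C.grade n, C.d x = 0 ∧ ∃ b ∈ D.grade (n + 1), f.toFun x - z = D.d b) ∧
    (∀ x ∈ C.grade n, C.d x = 0 → (∃ b ∈ D.grade (n + 1), f.toFun x = D.d b) →
      ∃ a ∈ C.grade (n + 1), x = C.d a)

/-- The right lifting property of `f` with respect to the maps `S(n−1) → D(n)`, `n ≥ 0`,
expressed elementwise via `Hom(D(n), A) ≅ A_n` and `Hom(S(n), A) ≅ ker(d : A_n → A_{n−1})`:
for `n = 0` it says surjectivity in degree 0; for `n ≥ 1` it says that any cycle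
`x ∈ X_{n−1}` together with `y ∈ Y_n` satisfying `f x = d y` lifts to `z ∈ X_n` with
`d z = x` and `f z = y`. -/
def RLPCells {K : Type} [CommRing K] {X Y : ChainAlg.{u} K} (f : ChainAlgHom K X Y) : Prop :=
  (∀ y ∈ Y.grade 0, ∃ x ∈ X.grade 0, f.toFun x = y) ∧
  ∀ (n : ℕ) (x : X.carrier) (y : Y.carrier), x ∈ X.grade n → X.d x = 0 →
    y ∈ Y.grade (n + 1) → f.toFun x = Y.d y →
    ∃ z ∈ X.grade (n + 1), X.d z = x ∧ f.toFun z = y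

/-- Surjectivity in all degrees with acyclic kernel. -/
def SurjAcyclicKer {K : Type} [CommRing K] {X Y : ChainAlg.{u} K}
    (f : ChainAlgHom K X Y) : Prop :=
  (∀ n : ℕ, ∀ y ∈ Y.grade n, ∃ x ∈ X.grade n, f.toFun x = y) ∧
  ∀ (n : ℕ) (x : X.carrier), x ∈ X.grade n → f.toFun x = 0 → X.d x = 0 →
    ∃ u ∈ X.grade (n + 1), f.toFun u = 0 ∧ X.d u = x

theorem rlp_to_sak {K : Type} [CommRing K] {X Y : ChainAlg.{u} K}
    (f : ChainAlgHom K X Y) (hfib : IsFib f) (h : RLPCells f) : SurjAcyclicKer f := by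
  constructor
  · intro n y hy
    cases n with
    | zero => exact h.1 y hy
    | succ m => exact hfib (m + 1) (Nat.succ_pos m) y hy
  · intro n x hx hfx hdx
    obtain ⟨z, hz, hdz, hfz⟩ :=
      h.2 n x 0 hx hdx (Submodule.zero_mem _) (by simp [hfx])
    exact ⟨z, hz, hfz, hdz⟩

theorem sak_to_rlp {K : Type} [CommRing K] {X Y : ChainAlg.{u} K}
    (f : ChainAlgHom K X Y) (h : SurjAcyclicKer f) : RLPCells f := by
  refine ⟨fun y hy => h.1 0 y hy, ?_⟩
  intro n x y hx hdx hy hfx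
  obtain ⟨w, hw, hfw⟩ := h.1 (n + 1) y hy
  have hmem : x - X.d w ∈ X.grade n := Submodule.sub_mem _ hx (X.d_grade n w hw)
  have hker : f.toFun (x - X.d w) = 0 := by
    rw [map_sub, f.comm_d, hfw, hfx, sub_self]
  have hcyc : X.d (x - X.d w) = 0 := by simp [map_sub, hdx, X.d_sq]
  obtain ⟨u, hu, hfu, hdu⟩ := h.2 n (x - X.d w) hmem hker hcyc
  refine ⟨w + u, Submodule.add_mem _ hw hu, ?_, ?_⟩
  · rw [map_add, hdu]; abel
  · rw [map_add, hfw, hfu, add_zero]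

theorem sak_to_qi {K : Type} [CommRing K] {X Y : ChainAlg.{u} K}
    (f : ChainAlgHom K X Y) (h : SurjAcyclicKer f) : IsQuasiIso f := by
  intro n
  constructor
  · intro z hz hdz
    obtain ⟨x, hx, hfx⟩ := h.1 n z hz
    cases n with
    | zero =>
      exact ⟨x, hx, X.d_zero x hx, 0, Submodule.zero_mem _, by simp [hfx]⟩
    | succ m =>
      have hdxm : X.d x ∈ X.grade m := X.d_grade m x hx
      have hk : f.toFun (X.d x) = 0 := by rw [f.comm_d, hfx, hdz]
      obtain ⟨u, hu, hfu, hdu⟩ := h.2 m (X.d x) hdxm hk (X.d_sq x)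
      exact ⟨x - u, Submodule.sub_mem _ hx hu, by simp [map_sub, hdu],
        0, Submodule.zero_mem _, by simp [map_sub, hfx, hfu]⟩
  · rintro x hx hdx ⟨b, hb, hfx⟩
    obtain ⟨w, hw, hfw⟩ := h.1 (n + 1) b hb
    have hmem : x - X.d w ∈ X.grade n := Submodule.sub_mem _ hx (X.d_grade n w hw)
    have hker : f.toFun (x - X.d w) = 0 := by
      rw [map_sub, f.comm_d, hfw, hfx, sub_self]
    have hcyc : X.d (x - X.d w) = 0 := by simp [map_sub, hdx, X.d_sq]
    obtain ⟨u, hu, hfu, hdu⟩ := h.2 n _ hmem hker hcyc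
    refine ⟨w + u, Submodule.add_mem _ hw hu, ?_⟩
    rw [map_add, hdu]; abel

theorem fibqi_to_sak {K : Type} [CommRing K] {X Y : ChainAlg.{u} K}
    (f : ChainAlgHom K X Y) (hfib : IsFib f) (hq : IsQuasiIso f) : SurjAcyclicKer f := by
  constructor
  · intro n y hy
    cases n with
    | zero =>
      obtain ⟨x, hx, hdx, b, hb, hfb⟩ := (hq 0).1 y hy (Y.d_zero y hy)
      obtain ⟨w, hw, hfw⟩ := hfib 1 one_pos b hb
      refine ⟨x - X.d w, Submodule.sub_mem _ hx (X.d_grade 0 w hw), ?_⟩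
      rw [map_sub, f.comm_d, hfw, eq_add_of_sub_eq hfb]
      abel
    | succ m => exact hfib (m + 1) (Nat.succ_pos m) y hy
  · intro n x hx hfx hdx
    obtain ⟨a, ha, hxa⟩ :=
      (hq n).2 x hx hdx ⟨0, Submodule.zero_mem _, by simp [hfx]⟩
    have hfa : f.toFun a ∈ Y.grade (n + 1) := f.grade_mem _ a ha
    have hdfa : Y.d (f.toFun a) = 0 := by rw [← f.comm_d, ← hxa, hfx]
    obtain ⟨c, hc, hdc, b, hb, hfb⟩ := (hq (n + 1)).1 (f.toFun a) hfa hdfa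
    obtain ⟨w, hw, hfw⟩ := hfib (n + 2) (Nat.succ_pos _) b hb
    refine ⟨a - c + X.d w,
      Submodule.add_mem _ (Submodule.sub_mem _ ha hc) (X.d_grade _ w hw), ?_, ?_⟩
    · rw [map_add, map_sub, f.comm_d, hfw, ← hfb]; abel
    · rw [map_add, map_sub, hdc, X.d_sq, sub_zero, add_zero, ← hxa]

/-- For a morphism `f` of chain algebras which is surjective in positive
degrees (a fibration), the following are equivalent: (i) `f` has the right lifting property
with respect to all `S(n−1) → D(n)`, `n ≥ 0`; (ii) `f` is surjective in all degrees and
`ker f` is acyclic; (iii) `f` is a fibration and a quasi-isomorphism. -/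
theorem stmt18 {K : Type} [CommRing K] {X Y : ChainAlg.{u} K}
    (f : ChainAlgHom K X Y) (hfib : IsFib f) :
    (RLPCells f ↔ SurjAcyclicKer f) ∧
    (RLPCells f ↔ (IsFib f ∧ IsQuasiIso f)) := by
  refine ⟨⟨fun h => rlp_to_sak f hfib h, fun h => sak_to_rlp f h⟩, ?_, ?_⟩
  · intro h; exact ⟨hfib, sak_to_qi f (rlp_to_sak f hfib h)⟩
  · rintro ⟨hf, hq⟩; exact sak_to_rlp f (fibqi_to_sak f hf hq)
end

section
/- If (f,g) : (∂ : C₁ → C₀) → (∂' : C₁' → C₀') is an acyclic fibration of crossed bimodules (f surjective, and the induced maps ker ∂ → ker ∂' and coker ∂ → coker ∂' are isomorphisms), then g is surjective and the square with horizontal maps ∂, ∂' and vertical maps f, g is a pullback square; moreover the induced map ker f → ker g is an isomorphism. -/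
open MulOpposite

/-- If `(f,g) : (d : C₁ → C₀) → (d' : C₁' → C₀')` is an acyclic fibration of
crossed bimodules (`f` surjective, and the induced maps `ker d → ker d'` and
`coker d → coker d'` are isomorphisms), then `g` is surjective, the square is a pullback,
and the induced map `ker f → ker g` is an isomorphism. -/
theorem stmt19 {K C₀ C₁ C₀' C₁' : Type*} [CommRing K]
    [Ring C₀] [Algebra K C₀] [Ring C₀'] [Algebra K C₀']
    [AddCommGroup C₁] [Module C₀ C₁] [Module C₀ᵐᵒᵖ C₁] [SMulCommClass C₀ C₀ᵐᵒᵖ C₁]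
    [AddCommGroup C₁'] [Module C₀' C₁'] [Module C₀'ᵐᵒᵖ C₁'] [SMulCommClass C₀' C₀'ᵐᵒᵖ C₁']
    (d : C₁ →+ C₀)
    (hl : ∀ (r : C₀) (x : C₁), d (r • x) = r * d x)
    (hr : ∀ (r : C₀) (x : C₁), d (op r • x) = d x * r)
    (peiffer : ∀ x y : C₁, d x • y = op (d y) • x)
    (d' : C₁' →+ C₀')
    (hl' : ∀ (r : C₀') (x : C₁'), d' (r • x) = r * d' x)
    (hr' : ∀ (r : C₀') (x : C₁'), d' (op r • x) = d' x * r)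
    (peiffer' : ∀ x y : C₁', d' x • y = op (d' y) • x)
    (g : C₀ →+* C₀') (f : C₁ →+ C₁')
    (hfl : ∀ (r : C₀) (x : C₁), f (r • x) = g r • f x)
    (hfr : ∀ (r : C₀) (x : C₁), f (op r • x) = op (g r) • f x)
    (hcomm : ∀ x : C₁, d' (f x) = g (d x))
    -- (f,g) is a fibration: f is surjective
    (hfsurj : Function.Surjective f)
    -- (f,g) is a weak equivalence: iso on kernels ...
    (hkerbij : Function.Bijective (fun x : {x : C₁ // d x = 0} =>
      (⟨f x.val, by rw [hcomm, x.prop]; exact map_zero g⟩ : {y : C₁' // d' y = 0})))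
    -- ... and iso on cokernels (stated elementwise)
    (hcoker_surj : ∀ c' : C₀', ∃ (c : C₀) (x' : C₁'), c' = g c + d' x')
    (hcoker_inj : ∀ c : C₀, (∃ x' : C₁', g c = d' x') → ∃ x : C₁, c = d x) :
    -- g is surjective
    Function.Surjective g ∧
    -- the square is a pullback
    (∀ (c : C₀) (x' : C₁'), g c = d' x' → ∃! x : C₁, f x = x' ∧ d x = c) ∧
    -- the induced map ker f → ker g is an isomorphism
    Function.Bijective (fun x : {x : C₁ // f x = 0} =>
      (⟨d x.val, by rw [← hcomm, x.prop]; exact map_zero d'⟩ : {c : C₀ // g c = 0})) := by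

  have kinj : ∀ (x : C₁), d x = 0 → f x = 0 → x = 0 := by
    intro x hd hf
    have h0 : (0 : C₁) ∈ {x : C₁ | d x = 0} := by simp
    have := hkerbij.1 (a₁ := ⟨x, hd⟩) (a₂ := ⟨0, by simp⟩)
      (by apply Subtype.ext; simp [hf])
    exact congrArg Subtype.val this
  have ksurj : ∀ (y : C₁'), d' y = 0 → ∃ x : C₁, d x = 0 ∧ f x = y := by
    intro y hy
    obtain ⟨⟨x, hx⟩, hfx⟩ := hkerbij.2 ⟨y, hy⟩
    exact ⟨x, hx, congrArg Subtype.val hfx⟩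
  refine ⟨?_, ?_, ?_, ?_⟩
  · intro c'
    obtain ⟨c, x', rfl⟩ := hcoker_surj c'
    obtain ⟨x, rfl⟩ := hfsurj x'
    exact ⟨c + d x, by rw [map_add, hcomm]⟩
  · intro c x' hgc
    obtain ⟨x₀, rfl⟩ := hcoker_inj c ⟨x', hgc⟩
    have h1 : d' (x' - f x₀) = 0 := by rw [map_sub, hcomm, hgc, sub_self]
    obtain ⟨z, hz, hfz⟩ := ksurj _ h1
    refine ⟨x₀ + z, ⟨by rw [map_add, hfz]; abel, by rw [map_add, hz, add_zero]⟩, ?_⟩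
    rintro y ⟨hfy, hdy⟩
    have hw : y - (x₀ + z) = 0 := by
      apply kinj
      · rw [map_sub, hdy, map_add, hz, add_zero, sub_self]
      · rw [map_sub, hfy, map_add, hfz]; abel
    exact sub_eq_zero.mp hw
  · rintro ⟨x₁, h₁⟩ ⟨x₂, h₂⟩ h
    have hd : d x₁ = d x₂ := congrArg Subtype.val h
    have hw : x₁ - x₂ = 0 := kinj _ (by rw [map_sub, hd, sub_self])
      (by rw [map_sub, h₁, h₂, sub_zero])
    exact Subtype.ext (sub_eq_zero.mp hw)
  · rintro ⟨c, hc⟩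
    obtain ⟨x, rfl⟩ := hcoker_inj c ⟨0, by rw [hc, map_zero]⟩
    have h1 : d' (f x) = 0 := by rw [hcomm]; exact hc
    obtain ⟨z, hz, hfz⟩ := ksurj _ h1
    refine ⟨⟨x - z, by rw [map_sub, hfz, sub_self]⟩, Subtype.ext ?_⟩
    simp [hz]
end
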